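/- Let P be a finite poset, R a commutative unital ring, and Ψ an automorphism of I^3(P,R) such that for all x ≤ y ≤ z with l(x,z) ≤ 1 one has Ψ(e_{xyz}) − e_{xyz} ∈ J^3_2(P,R). If moreover, for a fixed k ≥ 1, Ψ(e_{xyz}) − e_{xyz} ∈ J^3_{k+1}(P,R) for all x ≤ y ≤ z with l(x,z) ≤ k, then Ψ(e_{xyz}) − e_{xyz} ∈ J^3_{k+2}(P,R) for all x ≤ y ≤ z with l(x,z) ≤ k+1. -/

import Mathlib

/-- 3-flags (chains x ≤ y ≤ z) in a poset `P`. -/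
abbrev Flag3 (P : Type*) [PartialOrder P] : Type _ :=
  {t : P × P × P // t.1 ≤ t.2.1 ∧ t.2.1 ≤ t.2.2}

/-- `ell x y` is the length of the interval `[x,y]`, i.e. the maximal cardinality of a
chain in `[x,y]` minus one. -/
noncomputable def ell {P : Type*} [PartialOrder P] (x y : P) : ℕ∞ :=
  (Set.Icc x y).chainHeight (· < ·) - 1

section PreDefs

variable (P R : Type*) [PartialOrder P] [LocallyFiniteOrder P] [CommRing R]

/-- The multiplication of the partial flag incidence algebra `I^3(P,R)`. -/
def mul3 : (Flag3 P → R) → (Flag3 P → R) → (Flag3 P → R) := fun f g t =>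
  ∑ p ∈ ((Finset.Icc t.1.1 t.1.2.1) ×ˢ (Finset.Icc t.1.2.1 t.1.2.2)).attach,
    f ⟨(t.1.1, p.1.1, p.1.2), by
        obtain ⟨h1, h2⟩ := Finset.mem_product.mp p.2
        rw [Finset.mem_Icc] at h1 h2
        exact ⟨h1.1, h1.2.trans h2.1⟩⟩ *
    g ⟨(p.1.1, p.1.2, t.1.2.2), by
        obtain ⟨h1, h2⟩ := Finset.mem_product.mp p.2
        rw [Finset.mem_Icc] at h1 h2
        exact ⟨h1.2.trans h2.1, h2.2⟩⟩

variable {P}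

/-- The standard basis element `e_t` of `I^3(P,R)`. -/
def e3 [DecidableEq P] (t0 : Flag3 P) : Flag3 P → R := fun t => if t = t0 then 1 else 0

variable (P)

/-- The ideal `J^3_k(P,R)` of functions vanishing on flags `(x,y,z)` with `l(x,z) < k`. -/
def J3 (k : ℕ) : Submodule R (Flag3 P → R) where
  carrier := {f | ∀ t : Flag3 P, ell t.1.1 t.1.2.2 < (k : ℕ∞) → f t = 0}
  add_mem' := by
    intro f g hf hg t ht
    simp only [Pi.add_apply, hf t ht, hg t ht, add_zero]
  zero_mem' := by intro t _; rfl
  smul_mem' := by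
    intro c f hf t ht
    simp only [Pi.smul_apply, hf t ht, smul_zero]

/-- The commutator submodule `[U,V]`. -/
def commSub (U V : Submodule R (Flag3 P → R)) : Submodule R (Flag3 P → R) :=
  Submodule.span R {h | ∃ f ∈ U, ∃ g ∈ V, h = mul3 P R f g - mul3 P R g f}

end PreDefs

/-!
Write `D_t = Ψ(e_t) - e_t`, so that `Ψ(e_s e_t) - e_s e_t = e_s D_t + D_s e_t + D_s D_t`, where
for `s = (x, m, n)` and `t = (m', n', z)` the product `e_s e_t` is `0` unless `(m', n') = (m, n)`,
and then it is `∑_{w ∈ [m, n]} e_{xwz}`. When `D_s` and `D_t` vanish on flags of length `≤ k`, the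
right-hand side at a flag `(a, b, c)` with `l(a, c) ≤ k + 1` reduces to the three terms
`D_t(a, n, c)`, `D_s(a, m', c)` and `D_s(a, a, c) D_t(a, c, c)`. Reading such identities at one or
two well-chosen flags isolates a new coefficient `D_t(a, b, c)` with `l(a, c) = k + 1`; for short
`t` this reaches every coefficient except `D_{aaa}(a, a, c)` and `D_{ccc}(a, c, c)`. Next,
`e_{xyz} = e_{xyy} e_{yyz}` settles the flags `x < y < z` of length `k + 1`, and a point
`x < w < z` (it exists as `l(x, z) = k + 1 ≥ 2`) settles `e_{xxz}` and `e_{xzz}`. The two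
exceptional coefficients come last, from `e_{aaa} e_{acc} = 0` and `e_{aac} e_{ccc} = 0`.
-/

section Length

variable {P : Type*} [PartialOrder P] {a b c : P}

lemma ell_self (a : P) : ell a a = 0 := by
  rw [ell, Set.Icc_self,
    ← Set.encard_eq_chainHeight_of_isChain _ Set.subsingleton_singleton.isChain,
    Set.encard_singleton, tsub_self]

lemma one_le_chainHeight_Icc (hab : a ≤ b) : 1 ≤ (Set.Icc a b).chainHeight (· < ·) :=
  (Set.one_le_chainHeight_iff _ _).mpr ⟨a, Set.left_mem_Icc.mpr hab⟩

lemma one_le_ell (hab : a < b) : 1 ≤ ell a b := by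
  have h2 : 2 ≤ (Set.Icc a b).chainHeight (· < ·) := by
    rw [← Set.encard_pair hab.ne]
    refine Set.encard_le_chainHeight_of_isChain _ _ ?_ (IsChain.pair hab)
    simp [Set.insert_subset_iff, hab.le]
  exact ENat.le_sub_one_of_lt (lt_of_lt_of_le (by norm_num) h2)

/-- A chain of `[a, b]` and a chain of `[b, c]` together form a chain of `[a, c]`, and they share
at most `b`. -/
lemma chainHeight_Icc_add_le (hab : a ≤ b) (hbc : b ≤ c) :
    (Set.Icc a b).chainHeight (· < ·) + (Set.Icc b c).chainHeight (· < ·)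
      ≤ (Set.Icc a c).chainHeight (· < ·) + 1 := by
  rw [Set.chainHeight_eq_iSup (Set.Icc a b), Set.chainHeight_eq_iSup (Set.Icc b c)]
  have : ∀ s : Set P, Nonempty {t : Set P // t ⊆ s ∧ IsChain (· < ·) t} :=
    fun s => ⟨⟨∅, Set.empty_subset _, IsChain.empty⟩⟩
  refine ENat.iSup_add_iSup_le fun ⟨t₁, ht₁, hc₁⟩ ⟨t₂, ht₂, hc₂⟩ => ?_
  rw [← Set.encard_union_add_encard_inter]
  gcongr
  · refine Set.encard_le_chainHeight_of_isChain _ _ ?_ ?_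
    · rintro x (hx | hx)
      exacts [⟨(ht₁ hx).1, (ht₁ hx).2.trans hbc⟩, ⟨hab.trans (ht₂ hx).1, (ht₂ hx).2⟩]
    · rintro x (hx | hx) y (hy | hy) hxy
      · exact hc₁ hx hy hxy
      · exact Or.inl (lt_of_le_of_ne ((ht₁ hx).2.trans (ht₂ hy).1) hxy)
      · exact Or.inr (lt_of_le_of_ne ((ht₁ hy).2.trans (ht₂ hx).1) hxy.symm)
      · exact hc₂ hx hy hxy
  · calc (t₁ ∩ t₂).encard ≤ ({b} : Set P).encard :=
          Set.encard_le_encard fun x hx => le_antisymm (ht₁ hx.1).2 (ht₂ hx.2).1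
      _ = 1 := Set.encard_singleton b

lemma ell_add_ell_le (hab : a ≤ b) (hbc : b ≤ c) : ell a b + ell b c ≤ ell a c := by
  refine (ENat.addLECancellable_of_ne_top ENat.one_ne_top).le_tsub_of_add_le_right ?_
  refine (ENat.add_le_add_iff_right ENat.one_ne_top).mp ?_
  calc ell a b + ell b c + 1 + 1
      = (Set.Icc a b).chainHeight (· < ·) - 1 + 1
        + ((Set.Icc b c).chainHeight (· < ·) - 1 + 1) := by rw [ell, ell]; ring
    _ ≤ (Set.Icc a c).chainHeight (· < ·) + 1 := by
      rw [tsub_add_cancel_of_le (one_le_chainHeight_Icc hab),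
        tsub_add_cancel_of_le (one_le_chainHeight_Icc hbc)]
      exact chainHeight_Icc_add_le hab hbc

lemma exists_between_of_two_le_ell (h : 2 ≤ ell a c) : ∃ b, a < b ∧ b < c := by
  by_contra! hno
  have hsub : Set.Icc a c ⊆ {a, c} := fun b hb => by
    rcases hb.1.eq_or_lt with rfl | hab
    · exact Or.inl rfl
    · exact Or.inr (eq_of_le_of_not_lt hb.2 (hno b hab))
  have h2 : (Set.Icc a c).chainHeight (· < ·) ≤ 2 :=
    ((Set.chainHeight_mono _ _ _ hsub).trans (Set.chainHeight_le_encard _ _)).trans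
      ((Set.encard_insert_le _ _).trans (by simp; norm_num))
  have : ell a c ≤ 1 := (tsub_le_tsub_right h2 1).trans (by norm_num)
  exact absurd (h.trans this) (by norm_num)

lemma ell_le_of_lt_left {n : ℕ∞} (hab : a < b) (hbc : b ≤ c) (h : ell a c ≤ n + 1) :
    ell b c ≤ n := by
  refine (ENat.add_le_add_iff_left ENat.one_ne_top).mp ?_
  calc 1 + ell b c ≤ ell a b + ell b c := by gcongr; exact one_le_ell hab
    _ ≤ n + 1 := (ell_add_ell_le hab.le hbc).trans h
    _ = 1 + n := add_comm _ _

lemma ell_le_of_lt_right {n : ℕ∞} (hab : a ≤ b) (hbc : b < c) (h : ell a c ≤ n + 1) :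
    ell a b ≤ n := by
  refine (ENat.add_le_add_iff_right ENat.one_ne_top).mp ?_
  calc ell a b + 1 ≤ ell a b + ell b c := by gcongr; exact one_le_ell hbc
    _ ≤ n + 1 := (ell_add_ell_le hab hbc.le).trans h

lemma lt_of_ell_ne_zero (h : ell a c ≠ 0) : a < c := by
  have hac : a ≤ c := by
    by_contra hac
    rw [ell, Set.Icc_eq_empty hac, Set.chainHeight_empty, zero_tsub] at h
    exact h rfl
  exact lt_of_le_of_ne hac fun hac => h (hac ▸ ell_self a)

variable {k : ℕ}

lemma lt_of_ell_eq_add_one (h : ell a c = k + 1) : a < c :=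
  lt_of_ell_ne_zero (by simp [h])

lemma not_ell_le_of_eq_add_one (h : ell a c = k + 1) : ¬ell a c ≤ k := by
  rw [h]; exact_mod_cast Nat.not_succ_le_self k

lemma ell_le_or_eq_of_le_add_one (h : ell a c ≤ k + 1) : ell a c ≤ k ∨ ell a c = k + 1 :=
  (le_iff_lt_or_eq.mp h).imp_left ENat.lt_natCast_add_one_iff.mp

end Length

open Finset

section Coefficients

variable {P R : Type*} [PartialOrder P] [CommRing R] {f g : Flag3 P → R} {a b c : P}

open Classical in
/-- The coefficient of `f` at the triple `(a, b, c)`, taken to be `0` unless `a ≤ b ≤ c`. -/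
noncomputable def coeff3 (a b c : P) : (Flag3 P → R) →+ R :=
  if h : a ≤ b ∧ b ≤ c then Pi.evalAddMonoidHom (fun _ => R) ⟨(a, b, c), h⟩ else 0

lemma coeff3_of_le (h : a ≤ b ∧ b ≤ c) : coeff3 a b c f = f ⟨(a, b, c), h⟩ := by
  rw [coeff3, dif_pos h]; rfl

lemma coeff3_of_not_le (h : ¬(a ≤ b ∧ b ≤ c)) : coeff3 a b c f = 0 := by
  rw [coeff3, dif_neg h]; rfl

lemma ext_coeff3 (h : ∀ a b c : P, coeff3 a b c f = coeff3 a b c g) : f = g :=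
  funext fun ⟨(a, b, c), hle⟩ => by simpa [coeff3_of_le hle] using h a b c

lemma mem_J3_iff {n : ℕ} :
    f ∈ J3 P R n ↔ ∀ a b c : P, ell a c < n → coeff3 a b c f = 0 := by
  refine ⟨fun hf a b c h => ?_, fun hf ⟨(a, b, c), hle⟩ h => ?_⟩
  · by_cases hle : a ≤ b ∧ b ≤ c
    · rw [coeff3_of_le hle]; exact hf _ h
    · exact coeff3_of_not_le hle
  · simpa [coeff3_of_le hle] using hf a b c h

lemma coeff3_eq_zero_of_mem_J3 {n : ℕ} (hf : f ∈ J3 P R (n + 1)) (h : ell a c ≤ n) :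
    coeff3 a b c f = 0 :=
  mem_J3_iff.mp hf a b c (by push_cast; exact ENat.lt_natCast_add_one_iff.mpr h)

lemma mem_J3_succ_iff {n : ℕ} : f ∈ J3 P R (n + 1) ↔
    ∀ ⦃a b c : P⦄, a ≤ b → b ≤ c → ell a c ≤ n → coeff3 a b c f = 0 := by
  refine ⟨fun hf a b c _ _ h => coeff3_eq_zero_of_mem_J3 hf h, fun hf => mem_J3_iff.mpr ?_⟩
  intro a b c h
  by_cases hle : a ≤ b ∧ b ≤ c
  · exact hf hle.1 hle.2 (ENat.lt_natCast_add_one_iff.mp (by exact_mod_cast h))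
  · exact coeff3_of_not_le hle

lemma J3_antitone : Antitone (J3 P R) :=
  fun _ _ hmn _ hf t ht => hf t (ht.trans_le (by exact_mod_cast hmn))

section Basis

variable [DecidableEq P]

variable (R) in
/-- The basis element `e_{xyz}`, indexed by an arbitrary triple (it is `0` unless `x ≤ y ≤ z`). -/
def E3 (x y z : P) : Flag3 P → R := fun t => if t.1 = (x, y, z) then 1 else 0

lemma coeff3_E3 {x y z : P} (hxy : x ≤ y) (hyz : y ≤ z) :
    coeff3 a b c (E3 R x y z) = if a = x ∧ b = y ∧ c = z then 1 else 0 := by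
  by_cases hle : a ≤ b ∧ b ≤ c
  · simp [coeff3_of_le hle, E3]
  · rw [coeff3_of_not_le hle, if_neg]
    rintro ⟨rfl, rfl, rfl⟩
    exact hle ⟨hxy, hyz⟩

lemma e3_eq_E3 {x y z : P} (h : x ≤ y ∧ y ≤ z) : e3 R ⟨(x, y, z), h⟩ = E3 R x y z := by
  funext t
  simp [e3, E3, Subtype.ext_iff]

end Basis

variable [LocallyFiniteOrder P]

lemma coeff3_mul3 (a b c : P) :
    coeff3 a b c (mul3 P R f g)
      = ∑ u ∈ Icc a b, ∑ v ∈ Icc b c, coeff3 a u v f * coeff3 u v c g := by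
  by_cases hle : a ≤ b ∧ b ≤ c
  · rw [coeff3_of_le hle, mul3, ← sum_product']
    conv_rhs => rw [← sum_attach]
    refine sum_congr rfl fun ⟨(u, v), huv⟩ _ => ?_
    simp only [mem_product, mem_Icc] at huv
    rw [coeff3_of_le ⟨huv.1.1, huv.1.2.trans huv.2.1⟩,
      coeff3_of_le ⟨huv.1.2.trans huv.2.1, huv.2.2⟩]
  · rw [coeff3_of_not_le hle]
    rcases not_and_or.mp hle with h | h <;> simp [Icc_eq_empty h]

lemma mul3_add_add (f f' g g' : Flag3 P → R) :
    mul3 P R (f + f') (g + g')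
      = mul3 P R f g + mul3 P R f g' + mul3 P R f' g + mul3 P R f' g' := by
  refine ext_coeff3 fun a b c => ?_
  simp only [coeff3_mul3, map_add, ← sum_add_distrib]
  exact sum_congr rfl fun _ _ => sum_congr rfl fun _ _ => by ring

variable [DecidableEq P]

lemma coeff3_mul3_E3_left {x m n : P} (hxm : x ≤ m) (hmn : m ≤ n) :
    coeff3 a b c (mul3 P R (E3 R x m n) g)
      = if a = x ∧ m ∈ Icc a b ∧ n ∈ Icc b c then coeff3 m n c g else 0 := by
  simp [coeff3_mul3, coeff3_E3 hxm hmn, ite_and]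

lemma coeff3_mul3_E3_right {m n z : P} (hmn : m ≤ n) (hnz : n ≤ z) :
    coeff3 a b c (mul3 P R f (E3 R m n z))
      = if m ∈ Icc a b ∧ n ∈ Icc b c ∧ c = z then coeff3 a m n f else 0 := by
  simp [coeff3_mul3, coeff3_E3 hmn hnz, ite_and]

lemma mul3_E3_E3_of_ne {x m n m' n' z : P} (hxm : x ≤ m) (hmn : m ≤ n) (hm'n' : m' ≤ n')
    (hn'z : n' ≤ z) (hne : (m, n) ≠ (m', n')) : mul3 P R (E3 R x m n) (E3 R m' n' z) = 0 := by
  refine ext_coeff3 fun a b c => ?_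
  simp_all [coeff3_mul3_E3_left hxm hmn, coeff3_E3 hm'n' hn'z]

lemma mul3_E3_E3 {x m n z : P} (hxm : x ≤ m) (hmn : m ≤ n) (hnz : n ≤ z) :
    mul3 P R (E3 R x m n) (E3 R m n z) = ∑ w ∈ Icc m n, E3 R x w z := by
  refine ext_coeff3 fun a b c => ?_
  have hE : ∀ w ∈ Icc m n, coeff3 a b c (E3 R x w z) = if a = x ∧ b = w ∧ c = z then 1 else 0 :=
    fun w hw => coeff3_E3 (hxm.trans (mem_Icc.mp hw).1) ((mem_Icc.mp hw).2.trans hnz)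
  rw [map_sum, sum_congr rfl hE, coeff3_mul3_E3_left hxm hmn, coeff3_E3 hmn hnz]
  by_cases hb : b ∈ Icc m n
  · rw [sum_eq_single_of_mem b hb fun w _ hwb => if_neg fun h => hwb h.2.1.symm]
    rw [mem_Icc] at hb
    by_cases hax : a = x <;> by_cases hcz : c = z <;> simp [hax, hcz, hb, hxm, hnz]
  · rw [sum_eq_zero fun w hw => if_neg fun (h : a = x ∧ b = w ∧ c = z) => hb (h.2.1 ▸ hw),
      if_neg]
    rintro ⟨-, hm, hn⟩
    exact hb (mem_Icc.mpr ⟨(mem_Icc.mp hm).2, (mem_Icc.mp hn).1⟩)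

end Coefficients

section SmallProducts

variable {P R : Type*} [PartialOrder P] [LocallyFiniteOrder P] [CommRing R]
  {f g : Flag3 P → R} {k : ℕ} {a b c : P}

lemma coeff3_mul3_of_mem_J3 (hf : f ∈ J3 P R (k + 1)) (hg : g ∈ J3 P R (k + 1))
    (hab : a ≤ b) (hbc : b ≤ c) (hac : ell a c ≤ k + 1) :
    coeff3 a b c (mul3 P R f g) = coeff3 a a c f * coeff3 a c c g := by
  rw [coeff3_mul3, sum_eq_single_of_mem a (left_mem_Icc.mpr hab),
    sum_eq_single_of_mem c (right_mem_Icc.mpr hbc)]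
  · intro v hv hvc
    have hv := mem_Icc.mp hv
    rw [coeff3_eq_zero_of_mem_J3 hf
      (ell_le_of_lt_right (hab.trans hv.1) (lt_of_le_of_ne hv.2 hvc) hac), zero_mul]
  · intro u hu hua
    have hu := mem_Icc.mp hu
    refine sum_eq_zero fun v _ => ?_
    rw [coeff3_eq_zero_of_mem_J3 hg
      (ell_le_of_lt_left (lt_of_le_of_ne hu.1 (Ne.symm hua)) (hu.2.trans hbc) hac), mul_zero]

variable [DecidableEq P]

lemma coeff3_mul3_E3_left_of_mem_J3 {x m n : P} (hg : g ∈ J3 P R (k + 1)) (hxm : x ≤ m)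
    (hmn : m ≤ n) (hab : a ≤ b) (hac : ell a c ≤ k + 1) :
    coeff3 a b c (mul3 P R (E3 R x m n) g)
      = if a = x ∧ m = a ∧ n ∈ Icc b c then coeff3 a n c g else 0 := by
  rw [coeff3_mul3_E3_left hxm hmn]
  by_cases hma : m = a
  · subst hma
    simp only [left_mem_Icc, hab, true_and]
  · simp only [hma, false_and, and_false, if_false, ite_eq_right_iff]
    rintro ⟨-, hm, hn⟩
    rw [mem_Icc] at hm hn
    exact coeff3_eq_zero_of_mem_J3 hg
      (ell_le_of_lt_left (lt_of_le_of_ne hm.1 (Ne.symm hma)) ((hm.2.trans hn.1).trans hn.2) hac)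

lemma coeff3_mul3_E3_right_of_mem_J3 {m n z : P} (hf : f ∈ J3 P R (k + 1)) (hmn : m ≤ n)
    (hnz : n ≤ z) (hbc : b ≤ c) (hac : ell a c ≤ k + 1) :
    coeff3 a b c (mul3 P R f (E3 R m n z))
      = if m ∈ Icc a b ∧ n = c ∧ c = z then coeff3 a m c f else 0 := by
  rw [coeff3_mul3_E3_right hmn hnz]
  by_cases hnc : n = c
  · subst hnc
    simp only [right_mem_Icc, hbc, true_and]
  · simp only [hnc, false_and, and_false, if_false, ite_eq_right_iff]
    rintro ⟨hm, hn, -⟩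
    rw [mem_Icc] at hm hn
    exact coeff3_eq_zero_of_mem_J3 hf
      (ell_le_of_lt_right ((hm.1.trans hm.2).trans hn.1) (lt_of_le_of_ne hn.2 hnc) hac)

end SmallProducts

section Defect

variable {P R F : Type*} [PartialOrder P] [CommRing R] [FunLike F (Flag3 P → R) (Flag3 P → R)]
  (Ψ : F)

def defect [DecidableEq P] (x y z : P) : Flag3 P → R := Ψ (E3 R x y z) - E3 R x y z

variable [LocallyFiniteOrder P] {Ψ} (hmul : ∀ f g, Ψ (mul3 P R f g) = mul3 P R (Ψ f) (Ψ g))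
include hmul

lemma map_mul3_sub_mul3 (f g : Flag3 P → R) :
    Ψ (mul3 P R f g) - mul3 P R f g
      = mul3 P R f (Ψ g - g) + mul3 P R (Ψ f - f) g + mul3 P R (Ψ f - f) (Ψ g - g) := by
  have h := mul3_add_add f (Ψ f - f) g (Ψ g - g)
  rw [add_sub_cancel, add_sub_cancel] at h
  rw [hmul, h]
  abel

variable [DecidableEq P] {k : ℕ} {x m n m' n' z a b c : P}

lemma coeff3_map_mul3_E3_sub (hxm : x ≤ m) (hmn : m ≤ n) (hm'n' : m' ≤ n') (hn'z : n' ≤ z)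
    (hs : defect Ψ x m n ∈ J3 P R (k + 1)) (ht : defect Ψ m' n' z ∈ J3 P R (k + 1))
    (hab : a ≤ b) (hbc : b ≤ c) (hac : ell a c ≤ k + 1) :
    coeff3 a b c
        (Ψ (mul3 P R (E3 R x m n) (E3 R m' n' z)) - mul3 P R (E3 R x m n) (E3 R m' n' z))
      = (if a = x ∧ m = a ∧ n ∈ Icc b c then coeff3 a n c (defect Ψ m' n' z) else 0)
        + (if m' ∈ Icc a b ∧ n' = c ∧ c = z then coeff3 a m' c (defect Ψ x m n) else 0)
        + coeff3 a a c (defect Ψ x m n) * coeff3 a c c (defect Ψ m' n' z) := by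
  rw [map_mul3_sub_mul3 hmul, map_add, map_add, ← defect, ← defect,
    coeff3_mul3_E3_left_of_mem_J3 ht hxm hmn hab hac,
    coeff3_mul3_E3_right_of_mem_J3 hs hm'n' hn'z hbc hac,
    coeff3_mul3_of_mem_J3 hs ht hab hbc hac]

variable [AddMonoidHomClass F (Flag3 P → R) (Flag3 P → R)]

lemma coeff3_defect_expansion_of_ne (hxm : x ≤ m) (hmn : m ≤ n) (hm'n' : m' ≤ n')
    (hn'z : n' ≤ z) (hne : (m, n) ≠ (m', n'))
    (hs : defect Ψ x m n ∈ J3 P R (k + 1)) (ht : defect Ψ m' n' z ∈ J3 P R (k + 1))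
    (hab : a ≤ b) (hbc : b ≤ c) (hac : ell a c ≤ k + 1) :
    0 = (if a = x ∧ m = a ∧ n ∈ Icc b c then coeff3 a n c (defect Ψ m' n' z) else 0)
        + (if m' ∈ Icc a b ∧ n' = c ∧ c = z then coeff3 a m' c (defect Ψ x m n) else 0)
        + coeff3 a a c (defect Ψ x m n) * coeff3 a c c (defect Ψ m' n' z) := by
  rw [← coeff3_map_mul3_E3_sub hmul hxm hmn hm'n' hn'z hs ht hab hbc hac,
    mul3_E3_E3_of_ne hxm hmn hm'n' hn'z hne, map_zero, sub_zero, map_zero]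

lemma sum_coeff3_defect_expansion (hxm : x ≤ m) (hmn : m ≤ n) (hnz : n ≤ z)
    (hs : defect Ψ x m n ∈ J3 P R (k + 1)) (ht : defect Ψ m n z ∈ J3 P R (k + 1))
    (hab : a ≤ b) (hbc : b ≤ c) (hac : ell a c ≤ k + 1) :
    ∑ w ∈ Icc m n, coeff3 a b c (defect Ψ x w z)
      = (if a = x ∧ m = a ∧ n ∈ Icc b c then coeff3 a n c (defect Ψ m n z) else 0)
        + (if m ∈ Icc a b ∧ n = c ∧ c = z then coeff3 a m c (defect Ψ x m n) else 0)
        + coeff3 a a c (defect Ψ x m n) * coeff3 a c c (defect Ψ m n z) := by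
  rw [← coeff3_map_mul3_E3_sub hmul hxm hmn hmn hnz hs ht hab hbc hac,
    mul3_E3_E3 hxm hmn hnz, map_sum, ← sum_sub_distrib, map_sum]
  rfl

end Defect

section InductiveStep

variable {P R F : Type*} [PartialOrder P] [LocallyFiniteOrder P] [DecidableEq P] [CommRing R]
  [FunLike F (Flag3 P → R) (Flag3 P → R)] [AddMonoidHomClass F (Flag3 P → R) (Flag3 P → R)]
  {Ψ : F} {k : ℕ} {x y z a b c : P}
  (hmul : ∀ f g, Ψ (mul3 P R f g) = mul3 P R (Ψ f) (Ψ g))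
  (hfix : ∀ ⦃x y z : P⦄, x ≤ y → y ≤ z → ell x z ≤ k →
    defect Ψ x y z ∈ J3 P R (k + 1))
include hmul hfix

lemma coeff3_defect_short_of_lt_right (hxy : x ≤ y) (hyz : y ≤ z) (ht : ell x z ≤ k)
    (hab : a ≤ b) (hbc : b < c) (hac : ell a c ≤ k + 1) (hne : (a, b) ≠ (x, y))
    (hx : z = c → y = c → a ≤ x → x ≤ b) :
    coeff3 a b c (defect Ψ x y z) = 0 := by
  -- `e_{aab} e_{xyz} = 0`, read at `(a, b, c)` and at `(a, c, c)`
  have hs := hfix le_rfl hab (ell_le_of_lt_right hab hbc hac)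
  have e₁ := coeff3_defect_expansion_of_ne hmul le_rfl hab hxy hyz hne hs (hfix hxy hyz ht)
    hab hbc.le hac
  have e₂ := coeff3_defect_expansion_of_ne hmul le_rfl hab hxy hyz hne hs (hfix hxy hyz ht)
    (hab.trans hbc.le) le_rfl hac
  have hcond : (x ∈ Icc a b ∧ y = c ∧ c = z) ↔ (x ∈ Icc a c ∧ y = c ∧ c = z) := by
    simp only [mem_Icc]
    exact ⟨fun ⟨⟨h₁, h₂⟩, h₃⟩ => ⟨⟨h₁, h₂.trans hbc.le⟩, h₃⟩,
      fun ⟨⟨h₁, _⟩, h₃, h₄⟩ => ⟨⟨h₁, hx h₄.symm h₃ h₁⟩, h₃, h₄⟩⟩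
  rw [if_pos ⟨rfl, rfl, left_mem_Icc.mpr hbc.le⟩, if_congr hcond rfl rfl] at e₁
  rw [if_neg fun h => hbc.not_ge (mem_Icc.mp h.2.2).1] at e₂
  linear_combination e₂ - e₁

lemma coeff3_defect_short_of_lt_left (hxy : x ≤ y) (hyz : y ≤ z) (ht : ell x z ≤ k)
    (hab : a < b) (hbc : b ≤ c) (hac : ell a c ≤ k + 1) (hne : (y, z) ≠ (b, c))
    (hz : x = a → y = a → z ≤ c → b ≤ z) :
    coeff3 a b c (defect Ψ x y z) = 0 := by
  -- `e_{xyz} e_{bcc} = 0`, read at `(a, b, c)` and at `(a, a, c)`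
  have hs := hfix hbc le_rfl (ell_le_of_lt_left hab hbc hac)
  have e₁ := coeff3_defect_expansion_of_ne hmul hxy hyz hbc le_rfl hne (hfix hxy hyz ht) hs
    hab.le hbc hac
  have e₂ := coeff3_defect_expansion_of_ne hmul hxy hyz hbc le_rfl hne (hfix hxy hyz ht) hs
    le_rfl (hab.le.trans hbc) hac
  have hcond : (a = x ∧ y = a ∧ z ∈ Icc b c) ↔ (a = x ∧ y = a ∧ z ∈ Icc a c) := by
    simp only [mem_Icc]
    exact ⟨fun ⟨h₁, h₂, h₃, h₄⟩ => ⟨h₁, h₂, hab.le.trans h₃, h₄⟩,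
      fun ⟨h₁, h₂, _, h₄⟩ => ⟨h₁, h₂, hz h₁.symm h₂ h₄, h₄⟩⟩
  rw [if_congr hcond rfl rfl,
    if_pos (show b ∈ Icc a b ∧ c = c ∧ c = c from ⟨right_mem_Icc.mpr hab.le, rfl, rfl⟩)] at e₁
  rw [if_neg (show ¬(b ∈ Icc a a ∧ c = c ∧ c = c) from
    fun h => hab.not_ge (mem_Icc.mp h.1).2)] at e₂
  linear_combination e₂ - e₁

lemma coeff3_defect_aaz_acc (haz : a ≤ z) (ht : ell a z ≤ k) (hac : ell a c = k + 1) :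
    coeff3 a c c (defect Ψ a a z) = 0 := by
  -- `e_{aaa} e_{aaz} = e_{aaz}`, read at `(a, c, c)` and at `(a, a, c)`
  have hc := lt_of_ell_eq_add_one hac
  have hs := hfix (le_refl a) le_rfl (by simp [ell_self])
  have e₁ := sum_coeff3_defect_expansion hmul le_rfl le_rfl haz hs (hfix le_rfl haz ht)
    hc.le le_rfl hac.le
  have e₂ := sum_coeff3_defect_expansion hmul le_rfl le_rfl haz hs (hfix le_rfl haz ht)
    le_rfl hc.le hac.le
  simp only [Icc_self, sum_singleton, mem_singleton, mem_Icc, hc.ne, hc.le, le_refl, and_self,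
    and_false, false_and, if_true, if_false, add_zero, zero_add, left_eq_add] at e₁ e₂
  linear_combination e₁ + e₂

lemma coeff3_defect_xcc_aac (hxc : x ≤ c) (ht : ell x c ≤ k) (hac : ell a c = k + 1) :
    coeff3 a a c (defect Ψ x c c) = 0 := by
  -- `e_{xcc} e_{ccc} = e_{xcc}`, read at `(a, a, c)` and at `(a, c, c)`
  have hc := lt_of_ell_eq_add_one hac
  have ht' := hfix (le_refl c) le_rfl (by simp [ell_self])
  have e₁ := sum_coeff3_defect_expansion hmul hxc le_rfl le_rfl (hfix hxc le_rfl ht) ht'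
    le_rfl hc.le hac.le
  have e₂ := sum_coeff3_defect_expansion hmul hxc le_rfl le_rfl (hfix hxc le_rfl ht) ht'
    hc.le le_rfl hac.le
  simp only [Icc_self, sum_singleton, mem_singleton, mem_Icc, hc.ne', hc.le, le_refl, and_self,
    and_true, and_false, if_true, if_false, add_zero, zero_add, left_eq_add] at e₁ e₂
  linear_combination e₁ + e₂

lemma coeff3_defect_aaz_aac (haz : a < z) (ht : ell a z ≤ k) (hac : ell a c = k + 1) :
    coeff3 a a c (defect Ψ a a z) = 0 := by
  -- `e_{aaz} e_{azz} = ∑_{w ∈ [a, z]} e_{awz}`, read at `(a, a, c)`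
  have hc := lt_of_ell_eq_add_one hac
  have hzc : z ≠ c := by rintro rfl; exact not_ell_le_of_eq_add_one hac ht
  have e := sum_coeff3_defect_expansion hmul le_rfl haz.le le_rfl (hfix le_rfl haz.le ht)
    (hfix haz.le le_rfl ht) le_rfl hc.le hac.le
  rw [sum_eq_single_of_mem a (left_mem_Icc.mpr haz.le) fun w hw hwa =>
      coeff3_defect_short_of_lt_right hmul hfix (mem_Icc.mp hw).1 (mem_Icc.mp hw).2 ht
        le_rfl hc hac.le (by simp [Ne.symm hwa]) fun _ _ _ => le_rfl,
    ite_eq_right_iff.mpr fun h => coeff3_defect_short_of_lt_left hmul hfix haz.le le_rfl ht haz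
      (mem_Icc.mp h.2.2).2 hac.le (by simp [hzc]) fun _ h => absurd h haz.ne',
    coeff3_defect_short_of_lt_left hmul hfix haz.le le_rfl ht hc le_rfl hac.le (by simp [hzc])
      fun _ h => absurd h haz.ne'] at e
  simpa [hzc] using e

lemma coeff3_defect_xcc_acc (hxc : x < c) (ht : ell x c ≤ k) (hac : ell a c = k + 1) :
    coeff3 a c c (defect Ψ x c c) = 0 := by
  -- `e_{xxc} e_{xcc} = ∑_{w ∈ [x, c]} e_{xwc}`, read at `(a, c, c)`
  have hc := lt_of_ell_eq_add_one hac
  have hxa : x ≠ a := by rintro rfl; exact not_ell_le_of_eq_add_one hac ht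
  have e := sum_coeff3_defect_expansion hmul le_rfl hxc.le le_rfl (hfix le_rfl hxc.le ht)
    (hfix hxc.le le_rfl ht) hc.le le_rfl hac.le
  rw [sum_eq_single_of_mem c (right_mem_Icc.mpr hxc.le) fun w hw hwc =>
      coeff3_defect_short_of_lt_left hmul hfix (mem_Icc.mp hw).1 (mem_Icc.mp hw).2 ht
        hc le_rfl hac.le (by simp [hwc]) fun h => absurd h hxa,
    ite_eq_right_iff.mpr fun h => coeff3_defect_short_of_lt_right hmul hfix le_rfl hxc.le ht
      (mem_Icc.mp h.1).1 hxc hac.le (by simp [Ne.symm hxa]) fun _ h => absurd h hxc.ne,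
    coeff3_defect_short_of_lt_right hmul hfix le_rfl hxc.le ht le_rfl hc hac.le
      (by simp [Ne.symm hxa]) fun _ h => absurd h hxc.ne] at e
  simpa [hxa] using e

lemma coeff3_defect_short_acc (hxy : x ≤ y) (hyz : y ≤ z) (ht : ell x z ≤ k)
    (hac : ell a c = k + 1) (hne : (x, y, z) ≠ (c, c, c)) :
    coeff3 a c c (defect Ψ x y z) = 0 := by
  by_cases hyz' : y = c ∧ z = c
  · obtain ⟨rfl, rfl⟩ := hyz'
    exact coeff3_defect_xcc_acc hmul hfix (lt_of_le_of_ne hxy (by rintro rfl; exact hne rfl)) ht hac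
  by_cases hxy' : x = a ∧ y = a
  · obtain ⟨rfl, rfl⟩ := hxy'
    exact coeff3_defect_aaz_acc hmul hfix hyz ht hac
  exact coeff3_defect_short_of_lt_left hmul hfix hxy hyz ht (lt_of_ell_eq_add_one hac) le_rfl
    hac.le (by simpa using hyz') fun h₁ h₂ => absurd ⟨h₁, h₂⟩ hxy'

lemma coeff3_defect_short_aac (hxy : x ≤ y) (hyz : y ≤ z) (ht : ell x z ≤ k)
    (hac : ell a c = k + 1) (hne : (x, y, z) ≠ (a, a, a)) :
    coeff3 a a c (defect Ψ x y z) = 0 := by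
  by_cases hxy' : x = a ∧ y = a
  · obtain ⟨rfl, rfl⟩ := hxy'
    exact coeff3_defect_aaz_aac hmul hfix (lt_of_le_of_ne hyz (by rintro rfl; exact hne rfl)) ht hac
  by_cases hyz' : y = c ∧ z = c
  · obtain ⟨rfl, rfl⟩ := hyz'
    exact coeff3_defect_xcc_aac hmul hfix hxy ht hac
  exact coeff3_defect_short_of_lt_right hmul hfix hxy hyz ht le_rfl (lt_of_ell_eq_add_one hac)
    hac.le (by simpa [eq_comm] using hxy') fun h₁ h₂ _ => absurd ⟨h₂, h₁⟩ hyz'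

lemma coeff3_defect_short_of_lt_of_lt (hxy : x ≤ y) (hyz : y ≤ z) (ht : ell x z ≤ k)
    (hab : a < b) (hbc : b < c) (hac : ell a c = k + 1) : coeff3 a b c (defect Ψ x y z) = 0 := by
  by_cases hxy' : (a, b) = (x, y)
  · obtain ⟨rfl, rfl⟩ := Prod.mk.inj hxy'
    refine coeff3_defect_short_of_lt_left hmul hfix hxy hyz ht hab hbc.le hac.le ?_
      fun _ h => absurd h hab.ne'
    rintro ⟨-, rfl⟩
    exact not_ell_le_of_eq_add_one hac ht
  by_cases hW : z = c ∧ y = c ∧ a ≤ x ∧ ¬x ≤ b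
  · obtain ⟨rfl, rfl, hax, hxb⟩ := hW
    exact coeff3_defect_short_of_lt_left hmul hfix hxy hyz ht hab hbc.le hac.le
      (by simp [hbc.ne']) fun h => absurd (h ▸ hab.le) hxb
  exact coeff3_defect_short_of_lt_right hmul hfix hxy hyz ht hab.le hbc hac.le hxy'
    fun h₁ h₂ h₃ => not_not.mp fun h => hW ⟨h₁, h₂, h₃, h⟩

lemma coeff3_defect_short (hxy : x ≤ y) (hyz : y ≤ z) (ht : ell x z ≤ k)
    (hab : a ≤ b) (hbc : b ≤ c) (hac : ell a c = k + 1)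
    (h₁ : b = a → (x, y, z) ≠ (a, a, a)) (h₂ : b = c → (x, y, z) ≠ (c, c, c)) :
    coeff3 a b c (defect Ψ x y z) = 0 := by
  rcases hab.eq_or_lt with rfl | hab
  · exact coeff3_defect_short_aac hmul hfix hxy hyz ht hac (h₁ rfl)
  rcases hbc.eq_or_lt with rfl | hbc
  · exact coeff3_defect_short_acc hmul hfix hxy hyz ht hac (h₂ rfl)
  exact coeff3_defect_short_of_lt_of_lt hmul hfix hxy hyz ht hab hbc hac

lemma defect_mem_J3_of_lt_of_lt (hxy : x < y) (hyz : y < z) (htl : ell x z ≤ k + 1) :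
    defect Ψ x y z ∈ J3 P R (k + 2) := by
  refine mem_J3_succ_iff.mpr fun a b c hab hbc hac => ?_
  replace hac : ell a c ≤ k + 1 := by exact_mod_cast hac
  have hs := ell_le_of_lt_right hxy.le hyz htl
  have ht := ell_le_of_lt_left hxy hyz.le htl
  have e := sum_coeff3_defect_expansion hmul hxy.le le_rfl hyz.le (hfix hxy.le le_rfl hs)
    (hfix le_rfl hyz.le ht) hab hbc hac
  have hD : coeff3 a a c (defect Ψ x y y) = 0 := by
    rcases ell_le_or_eq_of_le_add_one hac with hac | hac
    · exact coeff3_eq_zero_of_mem_J3 (hfix hxy.le le_rfl hs) hac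
    · exact coeff3_defect_short hmul hfix hxy.le le_rfl hs le_rfl (hab.trans hbc) hac
        (fun _ h => hxy.ne (by simp_all)) (fun _ h => hxy.ne (by simp_all))
  rwa [Icc_self, sum_singleton, if_neg fun h => hxy.ne' (h.2.1.trans h.1),
    if_neg fun h => hyz.ne (h.2.1.trans h.2.2), hD, zero_mul, add_zero, add_zero] at e

lemma defect_xxz_mem_J3 (hk : 1 ≤ k) (hxz : ell x z = k + 1) :
    defect Ψ x x z ∈ J3 P R (k + 2) := by
  obtain ⟨w, hxw, hwz⟩ := exists_between_of_two_le_ell (a := x) (c := z) (by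
    rw [hxz, ← one_add_one_eq_two]; gcongr; exact_mod_cast hk)
  have hD := defect_mem_J3_of_lt_of_lt hmul hfix hxw hwz hxz.le
  refine mem_J3_succ_iff.mpr fun a b c hab hbc hac => ?_
  -- `e_{xxw} e_{xwz} = ∑_{v ∈ [x, w]} e_{xvz}`, and the terms `v ≠ x` are known
  have hs := hfix le_rfl hxw.le (ell_le_of_lt_right hxw.le hwz hxz.le)
  have e := sum_coeff3_defect_expansion hmul le_rfl hxw.le hwz.le hs (J3_antitone (by omega) hD)
    hab hbc (by exact_mod_cast hac)
  rwa [sum_eq_single_of_mem x (left_mem_Icc.mpr hxw.le) fun v hv hvx =>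
      coeff3_eq_zero_of_mem_J3 (defect_mem_J3_of_lt_of_lt hmul hfix
        (lt_of_le_of_ne (mem_Icc.mp hv).1 (Ne.symm hvx)) ((mem_Icc.mp hv).2.trans_lt hwz)
        hxz.le) hac,
    ite_eq_right_iff.mpr fun _ => coeff3_eq_zero_of_mem_J3 hD hac,
    if_neg fun h => hwz.ne (h.2.1.trans h.2.2), coeff3_eq_zero_of_mem_J3 hD hac,
    mul_zero, add_zero, add_zero] at e

lemma defect_xzz_mem_J3 (hk : 1 ≤ k) (hxz : ell x z = k + 1) :
    defect Ψ x z z ∈ J3 P R (k + 2) := by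
  obtain ⟨w, hxw, hwz⟩ := exists_between_of_two_le_ell (a := x) (c := z) (by
    rw [hxz, ← one_add_one_eq_two]; gcongr; exact_mod_cast hk)
  have hD := defect_mem_J3_of_lt_of_lt hmul hfix hxw hwz hxz.le
  refine mem_J3_succ_iff.mpr fun a b c hab hbc hac => ?_
  -- `e_{xwz} e_{wzz} = ∑_{v ∈ [w, z]} e_{xvz}`, and the terms `v ≠ z` are known
  have ht := hfix hwz.le le_rfl (ell_le_of_lt_left hxw hwz.le hxz.le)
  have e := sum_coeff3_defect_expansion hmul hxw.le hwz.le le_rfl (J3_antitone (by omega) hD) ht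
    hab hbc (by exact_mod_cast hac)
  rwa [sum_eq_single_of_mem z (right_mem_Icc.mpr hwz.le) fun v hv hvz =>
      coeff3_eq_zero_of_mem_J3 (defect_mem_J3_of_lt_of_lt hmul hfix
        (hxw.trans_le (mem_Icc.mp hv).1) (lt_of_le_of_ne (mem_Icc.mp hv).2 hvz) hxz.le) hac,
    if_neg fun h => hxw.ne' (h.2.1.trans h.1),
    ite_eq_right_iff.mpr fun _ => coeff3_eq_zero_of_mem_J3 hD hac,
    coeff3_eq_zero_of_mem_J3 hD hac, zero_mul, add_zero, add_zero] at e

lemma coeff3_defect_aaa_aac (hk : 1 ≤ k) (hac : ell a c = k + 1) :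
    coeff3 a a c (defect Ψ a a a) = 0 := by
  have hc := lt_of_ell_eq_add_one hac
  have hD := defect_xzz_mem_J3 hmul hfix hk hac
  have e := coeff3_defect_expansion_of_ne (x := a) hmul le_rfl le_rfl hc.le le_rfl
    (by simp [hc.ne]) (hfix le_rfl le_rfl (by simp [ell_self])) (J3_antitone (by omega) hD)
    le_rfl hc.le hac.le
  rw [coeff3_eq_zero_of_mem_J3 hD (by exact_mod_cast hac.le),
    coeff3_eq_zero_of_mem_J3 hD (by exact_mod_cast hac.le)] at e
  simpa [hc.le] using e.symm

lemma coeff3_defect_ccc_acc (hk : 1 ≤ k) (hac : ell a c = k + 1) :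
    coeff3 a c c (defect Ψ c c c) = 0 := by
  have hc := lt_of_ell_eq_add_one hac
  have hD := defect_xxz_mem_J3 hmul hfix hk hac
  have e := coeff3_defect_expansion_of_ne (z := c) hmul le_rfl hc.le le_rfl le_rfl
    (by simp [hc.ne]) (J3_antitone (by omega) hD) (hfix le_rfl le_rfl (by simp [ell_self]))
    hc.le le_rfl hac.le
  rw [coeff3_eq_zero_of_mem_J3 hD (by exact_mod_cast hac.le),
    coeff3_eq_zero_of_mem_J3 hD (by exact_mod_cast hac.le)] at e
  simpa [hc.le] using e.symm

lemma defect_mem_J3_of_ell_le (hk : 1 ≤ k) (hxy : x ≤ y) (hyz : y ≤ z) (ht : ell x z ≤ k) :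
    defect Ψ x y z ∈ J3 P R (k + 2) := by
  refine mem_J3_succ_iff.mpr fun a b c hab hbc hac => ?_
  rcases ell_le_or_eq_of_le_add_one (k := k) (by exact_mod_cast hac) with hac | hac
  · exact coeff3_eq_zero_of_mem_J3 (hfix hxy hyz ht) hac
  by_cases h₁ : b = a ∧ (x, y, z) = (a, a, a)
  · obtain ⟨rfl, h⟩ := h₁
    simp only [Prod.mk.injEq] at h
    obtain ⟨rfl, rfl, rfl⟩ := h
    exact coeff3_defect_aaa_aac hmul hfix hk hac
  by_cases h₂ : b = c ∧ (x, y, z) = (c, c, c)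
  · obtain ⟨rfl, h⟩ := h₂
    simp only [Prod.mk.injEq] at h
    obtain ⟨rfl, rfl, rfl⟩ := h
    exact coeff3_defect_ccc_acc hmul hfix hk hac
  exact coeff3_defect_short hmul hfix hxy hyz ht hab hbc hac (fun h h' => h₁ ⟨h, h'⟩)
    fun h h' => h₂ ⟨h, h'⟩

end InductiveStep

theorem automorphism_inductive_step_general
    {P R : Type*} [PartialOrder P] [DecidableEq P] [LocallyFiniteOrder P]
    [CommRing R]
    (Ψ : (Flag3 P → R) ≃ₗ[R] (Flag3 P → R))
    (hΨ : ∀ f g : Flag3 P → R, Ψ (mul3 P R f g) = mul3 P R (Ψ f) (Ψ g))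
    (k : ℕ) (hk : 1 ≤ k)
    (hind : ∀ t : Flag3 P, ell t.1.1 t.1.2.2 ≤ (k : ℕ∞) →
      Ψ (e3 R t) - e3 R t ∈ J3 P R (k + 1)) :
    ∀ t : Flag3 P, ell t.1.1 t.1.2.2 ≤ ((k : ℕ∞) + 1) →
      Ψ (e3 R t) - e3 R t ∈ J3 P R (k + 2) := by
  have hfix : ∀ ⦃x y z : P⦄, x ≤ y → y ≤ z → ell x z ≤ k →
      defect Ψ x y z ∈ J3 P R (k + 1) := by
    intro x y z hxy hyz h
    have := hind ⟨(x, y, z), hxy, hyz⟩ h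
    rwa [e3_eq_E3] at this
  rintro ⟨⟨x, y, z⟩, hxy, hyz⟩ htl
  dsimp only at hxy hyz htl
  rw [e3_eq_E3]
  rcases ell_le_or_eq_of_le_add_one htl with ht | ht
  · exact defect_mem_J3_of_ell_le hΨ hfix hk hxy hyz ht
  rcases hxy.eq_or_lt with rfl | hxy
  · exact defect_xxz_mem_J3 hΨ hfix hk ht
  rcases hyz.eq_or_lt with rfl | hyz
  · exact defect_xzz_mem_J3 hΨ hfix hk ht
  exact defect_mem_J3_of_lt_of_lt hΨ hfix hxy hyz htl

/-- (Inductive step.) Let `Ψ` be an automorphism of `I^3(P,R)` with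
`Ψ(e_{xyz}) - e_{xyz} ∈ J^3_2(P,R)` whenever `l(x,z) ≤ 1`. If, for a fixed `k ≥ 1`,
`Ψ(e_{xyz}) - e_{xyz} ∈ J^3_{k+1}(P,R)` whenever `l(x,z) ≤ k`, then
`Ψ(e_{xyz}) - e_{xyz} ∈ J^3_{k+2}(P,R)` whenever `l(x,z) ≤ k+1`. -/
theorem automorphism_inductive_step
    {P R : Type*} [PartialOrder P] [Fintype P] [DecidableEq P] [LocallyFiniteOrder P]
    [CommRing R]
    (Ψ : (Flag3 P → R) ≃ₗ[R] (Flag3 P → R))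
    (hΨ : ∀ f g : Flag3 P → R, Ψ (mul3 P R f g) = mul3 P R (Ψ f) (Ψ g))
    (hbase : ∀ t : Flag3 P, ell t.1.1 t.1.2.2 ≤ 1 → Ψ (e3 R t) - e3 R t ∈ J3 P R 2)
    (k : ℕ) (hk : 1 ≤ k)
    (hind : ∀ t : Flag3 P, ell t.1.1 t.1.2.2 ≤ (k : ℕ∞) →
      Ψ (e3 R t) - e3 R t ∈ J3 P R (k + 1)) :
    ∀ t : Flag3 P, ell t.1.1 t.1.2.2 ≤ ((k : ℕ∞) + 1) →
      Ψ (e3 R t) - e3 R t ∈ J3 P R (k + 2) :=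
  automorphism_inductive_step_general Ψ hΨ k hk hind
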